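/- arXiv:1612.03624 — 11 statements merged into one kernel-verified Lean document; each statement's English description precedes it below -/
import Mathlib

section
/- In any commutative automorphic Lie triple system T over a field of characteristic zero, the second axiom of Lie triple systems holds automatically: for all a, b, c, a', b' ∈ T, [a',b',[a,b,c]] = [[a',b',a],b,c] + [a,[a',b',b],c] + [a,b,[a',b',c]] (that is, the map x ↦ [a',b',x] is a derivation of the triple product). -/
/-!
Write `R(a', b') = [·, a', b']`. The commutative automorphic identity says exactly that every
`R(a', b')` is a derivation of the triple product, and skew-symmetry together with the Jacobi
identity give `[a', b', ·] = R(b', a') - R(a', b')`. A difference of derivations is a derivation.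
-/

namespace TripleProduct

variable {R T : Type*} [CommRing R] [AddCommGroup T] [Module R T]

def IsDerivation (br : T →ₗ[R] T →ₗ[R] T →ₗ[R] T) (f : T → T) : Prop :=
  ∀ a b c : T, f (br a b c) = br (f a) b c + br a (f b) c + br a b (f c)

variable {br : T →ₗ[R] T →ₗ[R] T →ₗ[R] T}

theorem IsDerivation.sub {f g : T → T} (hf : IsDerivation br f) (hg : IsDerivation br g) :
    IsDerivation br (f - g) := by
  intro a b c
  simp only [Pi.sub_apply, hf a b c, hg a b c, map_sub, LinearMap.sub_apply]
  abel

theorem isDerivation_rightMul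
    (ca : ∀ a b c a' b' : T,
      br (br a b c) a' b' = br (br a a' b') b c + br a (br b a' b') c + br a b (br c a' b'))
    (a' b' : T) :
    IsDerivation br (fun x => br x a' b') :=
  fun a b c => ca a b c a' b'

theorem leftMul_eq_rightMul_sub_rightMul
    (skew : ∀ a b c : T, br a b c = - br b a c)
    (jacobi : ∀ a b c : T, br a b c + br b c a + br c a b = 0) (a' b' : T) :
    (fun x => br a' b' x) = (fun x => br x b' a') - (fun x => br x a' b') := by
  funext x
  have h := jacobi x a' b'
  rw [skew b' x a'] at h
  rw [Pi.sub_apply, eq_sub_iff_add_eq, ← sub_eq_zero, ← h]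
  abel

end TripleProduct

theorem stmt_0_general {K T : Type*} [Field K] [AddCommGroup T] [Module K T]
    (br : T →ₗ[K] T →ₗ[K] T →ₗ[K] T)
    (skew : ∀ a b c : T, br a b c = - br b a c)
    (jacobi : ∀ a b c : T, br a b c + br b c a + br c a b = 0)
    (ca : ∀ a b c a' b' : T,
      br (br a b c) a' b' = br (br a a' b') b c + br a (br b a' b') c + br a b (br c a' b'))
    (a b c a' b' : T) :
    br a' b' (br a b c)
      = br (br a' b' a) b c + br a (br a' b' b) c + br a b (br a' b' c) := by
  have hD : TripleProduct.IsDerivation br (fun x => br a' b' x) := by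
    rw [TripleProduct.leftMul_eq_rightMul_sub_rightMul skew jacobi]
    exact (TripleProduct.isDerivation_rightMul ca b' a').sub
      (TripleProduct.isDerivation_rightMul ca a' b')
  exact hD a b c

/-- In any commutative automorphic Lie triple system over a field of
characteristic zero, the second axiom of Lie triple systems holds automatically. -/
theorem stmt_0 {K T : Type*} [Field K] [CharZero K] [AddCommGroup T] [Module K T]
    (br : T →ₗ[K] T →ₗ[K] T →ₗ[K] T)
    (skew : ∀ a b c : T, br a b c = - br b a c)
    (jacobi : ∀ a b c : T, br a b c + br b c a + br c a b = 0)
    (ca : ∀ a b c a' b' : T,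
      br (br a b c) a' b' = br (br a a' b') b c + br a (br b a' b') c + br a b (br c a' b'))
    (a b c a' b' : T) :
    br a' b' (br a b c)
      = br (br a' b' a) b c + br a (br a' b' b) c + br a b (br a' b' c) :=
  stmt_0_general br skew jacobi ca a b c a' b'
end

section
/- In any commutative automorphic Lie triple system T over a field of characteristic zero, for all a, a', b, c ∈ T one has [a,a',[c,b,a']] = 2·[a,a',[c,a',b]]. -/
/-!
Putting `a' = b'` in the commutative automorphic identity kills its middle term, because
`[a', a', x] = 0` by skew-symmetry in characteristic zero. Doing so twice, with the roles of `b`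
and `c` exchanged, and adding, shows that `x ↦ [a, a', x]` annihilates `[b, a', c] + [c, a', b]`.
The Jacobi identity writes `[c, b, a']` as `[c, a', b] - [b, a', c]`, whence the factor `2`.
-/

section TripleSystem

variable {K T : Type*} [CommRing K] [AddCommGroup T] [Module K T]
  (br : T →ₗ[K] T →ₗ[K] T →ₗ[K] T)

theorem bracket_bracket_add_bracket_bracket_swap_eq_zero
    (alt : ∀ x y : T, br x x y = 0)
    (ca : ∀ a b c a' b' : T,
      br (br a b c) a' b' = br (br a a' b') b c + br a (br b a' b') c + br a b (br c a' b'))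
    (a a' b c : T) :
    br a a' (br b a' c) + br a a' (br c a' b) = 0 := by
  have hb := ca a a' b a' c
  have hc := ca a a' c a' b
  simp only [alt, map_zero, LinearMap.zero_apply, add_zero] at hb hc
  linear_combination (norm := module) -hb - hc

theorem bracket_eq_sub_of_jacobi
    (skew : ∀ a b c : T, br a b c = - br b a c)
    (jacobi : ∀ a b c : T, br a b c + br b c a + br c a b = 0)
    (a b c : T) :
    br a b c = br a c b - br b c a := by
  linear_combination (norm := module) jacobi a b c - skew c a b

end TripleSystem

/-- In any commutative automorphic Lie triple system over a field of
characteristic zero, `[a,a',[c,b,a']] = 2·[a,a',[c,a',b]]`. -/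
theorem stmt_1 {K T : Type*} [Field K] [CharZero K] [AddCommGroup T] [Module K T]
    (br : T →ₗ[K] T →ₗ[K] T →ₗ[K] T)
    (skew : ∀ a b c : T, br a b c = - br b a c)
    (jacobi : ∀ a b c : T, br a b c + br b c a + br c a b = 0)
    (ca : ∀ a b c a' b' : T,
      br (br a b c) a' b' = br (br a a' b') b c + br a (br b a' b') c + br a b (br c a' b'))
    (a a' b c : T) :
    br a a' (br c b a') = (2 : K) • br a a' (br c a' b) := by
  have : IsAddTorsionFree T := .of_isTorsionFree K T
  have alt : ∀ x y : T, br x x y = 0 := fun x y => self_eq_neg.mp (skew x x y)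
  have hswap := bracket_bracket_add_bracket_bracket_swap_eq_zero br alt ca a a' b c
  rw [bracket_eq_sub_of_jacobi br skew jacobi c b a', map_sub, eq_neg_of_add_eq_zero_left hswap]
  module
end

section
/- In any commutative automorphic Lie triple system T over a field of characteristic zero, for all a, a', c ∈ T one has [a,a',[c,a',a]] = 0. -/
/-!
Write `x = [a,a',[a,a',c]]`. The commutative automorphic identity says that every right
multiplication `[·,u,v]` is a derivation; expanding `[[a,a',c],a',a]` and `[[a,a',a],a',c]` with it
and adding gives `[a,a',[c,a',a]] = -x`, since `[a',a',·] = 0`. The same identity with `a` and `a'`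
exchanged gives `[a,a',[c,a,a']] = x`, and the Jacobi identity `[c,a',a] = [a,a',c] + [c,a,a']`
then gives `[a,a',[c,a',a]] = 2x`. Hence `3x = 0`.
-/

namespace LinearMap

variable {R M : Type*} [CommSemiring R] [AddCommGroup M] [Module R M]
  (br : M →ₗ[R] M →ₗ[R] M →ₗ[R] M)

theorem apply_apply_rev_eq_neg (alt : ∀ a c : M, br a a c = 0)
    (ca : ∀ a b c a' b' : M,
      br (br a b c) a' b' = br (br a a' b') b c + br a (br b a' b') c + br a b (br c a' b'))
    (a b c : M) :
    br a b (br c b a) = - br a b (br a b c) := by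
  have h₁ := ca a b c b a
  have h₂ := ca a b a b c
  rw [alt, map_zero, zero_apply, add_zero] at h₁ h₂
  linear_combination (norm := abel) -(h₁ + h₂)

theorem apply_apply_rev_eq_zero [IsAddTorsionFree M]
    (skew : ∀ a b c : M, br a b c = - br b a c)
    (jacobi : ∀ a b c : M, br a b c + br b c a + br c a b = 0)
    (ca : ∀ a b c a' b' : M,
      br (br a b c) a' b' = br (br a a' b') b c + br a (br b a' b') c + br a b (br c a' b'))
    (a b c : M) :
    br a b (br c b a) = 0 := by
  have alt (a c : M) : br a a c = 0 := self_eq_neg.mp (skew a a c)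
  set x := br a b (br a b c)
  have h_neg : br a b (br c b a) = -x := br.apply_apply_rev_eq_neg alt ca a b c
  have h_swap : br a b (br c a b) = x := by
    have h := br.apply_apply_rev_eq_neg alt ca b a c
    rwa [skew b a, skew b a, skew b a c, map_neg, neg_neg, neg_inj] at h
  have h_jacobi : br c b a = br a b c + br c a b := by
    have h := jacobi c b a
    rw [skew b a c, skew a c b] at h
    linear_combination (norm := abel) h
  have h_three : 3 • x = 0 := by
    rw [h_jacobi, map_add, h_swap] at h_neg
    linear_combination (norm := abel) h_neg
  rw [h_neg, (nsmul_eq_zero_iff_right three_ne_zero).mp h_three, neg_zero]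

end LinearMap

/-- In any commutative automorphic Lie triple system over a field of
characteristic zero, `[a,a',[c,a',a]] = 0`. -/
theorem stmt_2 {K T : Type*} [Field K] [CharZero K] [AddCommGroup T] [Module K T]
    (br : T →ₗ[K] T →ₗ[K] T →ₗ[K] T)
    (skew : ∀ a b c : T, br a b c = - br b a c)
    (jacobi : ∀ a b c : T, br a b c + br b c a + br c a b = 0)
    (ca : ∀ a b c a' b' : T,
      br (br a b c) a' b' = br (br a a' b') b c + br a (br b a' b') c + br a b (br c a' b'))
    (a a' c : T) :
    br a a' (br c a' a) = 0 :=
  have : IsAddTorsionFree T := .of_isTorsionFree K T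
  br.apply_apply_rev_eq_zero skew jacobi ca a a' c
end

section
/- Let T be a commutative automorphic Lie triple system over a field of characteristic zero and fix a' ∈ T. Then the trilinear map (a,b,c) ↦ [a,a',[b,a',c]] is skew-symmetric in a, b, c; that is, for all a, b, c ∈ T: [a,a',[b,a',c]] = −[b,a',[a,a',c]], [a,a',[b,a',c]] = −[a,a',[c,a',b]], and [a,a',[b,a',c]] = −[c,a',[b,a',a]]. -/
/-!
By the commutative automorphic identity every `[·,x,y]` is a derivation of the triple product.
Applying `[·,x,w]` to `[u,x,v]`, applying `[·,x,v]` to `[u,x,w]` and adding, the terms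
`[u,[x,x,·],·]` vanish and leave `[u,x,[v,x,w]] = -[u,x,[w,x,v]]`. Combined with the Jacobi
identity this gives `3 [x,y,[x,y,z]] = 0`, so `[x,y,·]` squares to zero; polarizing in `x`
makes `[a,a',[b,a',c]]` skew in `a, b`, and the two transpositions generate all permutations.
-/

section TripleSystem

variable {R T : Type*} [CommSemiring R] [AddCommGroup T] [Module R T]
  {br : T →ₗ[R] T →ₗ[R] T →ₗ[R] T}

theorem br_self_left [IsAddTorsionFree T] (skew : ∀ a b c : T, br a b c = - br b a c)
    (x y : T) : br x x y = 0 :=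
  self_eq_neg.mp (skew x x y)

theorem br_br_swap [IsAddTorsionFree T] (skew : ∀ a b c : T, br a b c = - br b a c)
    (ca : ∀ a b c a' b' : T,
      br (br a b c) a' b' = br (br a a' b') b c + br a (br b a' b') c + br a b (br c a' b'))
    (u x v w : T) : br u x (br v x w) = - br u x (br w x v) := by
  have hvw := ca u x v x w
  have hwv := ca u x w x v
  simp only [br_self_left skew, map_zero, LinearMap.zero_apply, add_zero] at hvw hwv
  linear_combination (norm := module) -hvw - hwv

theorem br_br_self [IsAddTorsionFree T] (skew : ∀ a b c : T, br a b c = - br b a c)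
    (jacobi : ∀ a b c : T, br a b c + br b c a + br c a b = 0)
    (ca : ∀ a b c a' b' : T,
      br (br a b c) a' b' = br (br a a' b') b c + br a (br b a' b') c + br a b (br c a' b'))
    (x y z : T) : br x y (br x y z) = 0 := by
  have hJ : br z x y = br z y x - br x y z := by
    linear_combination (norm := module) jacobi x y z - skew y z x
  have h := br_br_swap skew ca y x z y
  simp only [skew y x, map_neg, neg_neg, neg_inj] at h
  rw [hJ, map_sub, br_br_swap skew ca x y z x] at h
  have h3 : 3 • br x y (br x y z) = 0 := by linear_combination (norm := module) -h
  exact (nsmul_eq_zero_iff_right three_ne_zero).mp h3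

theorem br_br_anticomm [IsAddTorsionFree T] (skew : ∀ a b c : T, br a b c = - br b a c)
    (jacobi : ∀ a b c : T, br a b c + br b c a + br c a b = 0)
    (ca : ∀ a b c a' b' : T,
      br (br a b c) a' b' = br (br a a' b') b c + br a (br b a' b') c + br a b (br c a' b'))
    (a b x c : T) : br a x (br b x c) = - br b x (br a x c) := by
  have h := br_br_self skew jacobi ca (a + b) x c
  simp only [map_add, LinearMap.add_apply, br_br_self skew jacobi ca, zero_add, add_zero] at h
  exact eq_neg_of_add_eq_zero_right h

end TripleSystem

/-- In any commutative automorphic Lie triple system over a field of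
characteristic zero, the map `(a,b,c) ↦ [a,a',[b,a',c]]` is skew-symmetric in `a,b,c`. -/
theorem stmt_3 {K T : Type*} [Field K] [CharZero K] [AddCommGroup T] [Module K T]
    (br : T →ₗ[K] T →ₗ[K] T →ₗ[K] T)
    (skew : ∀ a b c : T, br a b c = - br b a c)
    (jacobi : ∀ a b c : T, br a b c + br b c a + br c a b = 0)
    (ca : ∀ a b c a' b' : T,
      br (br a b c) a' b' = br (br a a' b') b c + br a (br b a' b') c + br a b (br c a' b'))
    (a' a b c : T) :
    br a a' (br b a' c) = - br b a' (br a a' c) ∧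
    br a a' (br b a' c) = - br a a' (br c a' b) ∧
    br a a' (br b a' c) = - br c a' (br b a' a) := by
  have : IsAddTorsionFree T := .of_isTorsionFree K T
  have anticomm := br_br_anticomm skew jacobi ca
  have swap := br_br_swap skew ca
  refine ⟨anticomm a b a' c, swap a a' b c, ?_⟩
  rw [anticomm a b, swap b a' a c, anticomm b c, neg_neg]
end

section
/- Let T be a commutative automorphic Lie triple system over a field of characteristic zero, let a' ∈ T, and let R := R_{a',a'} : T → T, x ↦ [x,a',a']. Then for every n ≥ 1 the n-th iterate Rⁿ is a derivation of T: for all a, b, c ∈ T, Rⁿ([a,b,c]) = [Rⁿ(a),b,c] + [a,Rⁿ(b),c] + [a,b,Rⁿ(c)]. -/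
/-!
Skew-symmetry and the Jacobi identity already force `[a,a,c] = 0`, and the commutative automorphic
identity says that every `R_{b,c}` is a derivation. Playing these facts against each other for
`R := R_{u,u}` shows that a bracket with two of its arguments in the image of `R` vanishes. In the
Leibniz expansion of `R (Rⁿ [a,b,c])` every cross term has two arguments in the image of `R`, so
the iterates of a derivation with this property are again derivations.
-/

section

variable {K T : Type*} [CommSemiring K] [AddCommGroup T] [Module K T]

def IsTripleDerivation (br : T →ₗ[K] T →ₗ[K] T →ₗ[K] T) (D : T → T) : Prop :=
  ∀ a b c : T, D (br a b c) = br (D a) b c + br a (D b) c + br a b (D c)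

theorem IsTripleDerivation.iterate {br : T →ₗ[K] T →ₗ[K] T →ₗ[K] T} {D : T → T}
    (hD : IsTripleDerivation br D) (hadd : ∀ x y : T, D (x + y) = D x + D y)
    (hDD_left : ∀ a b c : T, br (D a) (D b) c = 0)
    (hDD_outer : ∀ a b c : T, br (D a) b (D c) = 0)
    (hDD_right : ∀ a b c : T, br a (D b) (D c) = 0) {n : ℕ} (hn : n ≠ 0) :
    IsTripleDerivation br D^[n] := by
  obtain ⟨n, rfl⟩ := Nat.exists_eq_succ_of_ne_zero hn
  clear hn
  induction n with
  | zero => simpa using hD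
  | succ n ih =>
    intro a b c
    rw [Function.iterate_succ_apply', ih, hadd, hadd, hD, hD, hD]
    simp only [Function.iterate_succ_apply', hDD_left, hDD_outer, hDD_right, add_zero, zero_add]

theorem bracket_self_left_eq_zero {br : T →ₗ[K] T →ₗ[K] T →ₗ[K] T}
    (skew : ∀ a b c : T, br a b c = - br b a c)
    (jacobi : ∀ a b c : T, br a b c + br b c a + br c a b = 0) (a c : T) :
    br a a c = 0 := by
  simpa [skew a c a] using jacobi a a c

structure IsCommAutomorphicLTS (br : T →ₗ[K] T →ₗ[K] T →ₗ[K] T) : Prop where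
  skew : ∀ a b c : T, br a b c = - br b a c
  jacobi : ∀ a b c : T, br a b c + br b c a + br c a b = 0
  isTripleDerivation_R : ∀ b c : T, IsTripleDerivation br (fun x => br x b c)

namespace IsCommAutomorphicLTS

variable {br : T →ₗ[K] T →ₗ[K] T →ₗ[K] T}

theorem bracket_bracket_left (h : IsCommAutomorphicLTS br) (a b c b' c' : T) :
    br (br a b c) b' c' = br (br a b' c') b c + br a (br b b' c') c + br a b (br c b' c') :=
  h.isTripleDerivation_R b' c' a b c

theorem bracket_R_middle (h : IsCommAutomorphicLTS br) (u x y : T) :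
    br (br x u u) u y = br (br x u y) u u := by
  simpa [bracket_self_left_eq_zero h.skew h.jacobi] using h.bracket_bracket_left x u u u y

theorem bracket_middle_R_eq_zero (h : IsCommAutomorphicLTS br) (u x y : T) :
    br x u (br y u u) = 0 := by
  have hca := h.bracket_bracket_left x u y u u
  rw [h.bracket_R_middle, bracket_self_left_eq_zero h.skew h.jacobi, map_zero,
    LinearMap.zero_apply, add_zero] at hca
  exact left_eq_add.mp hca

theorem bracket_R_R_right_eq_zero (h : IsCommAutomorphicLTS br) (u x y z : T) :
    br x (br y u u) (br z u u) = 0 := by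
  have hRy_middle : br z (br y u u) u = - br (br y u z) u u := by
    have hj := h.jacobi z (br y u u) u
    rw [h.bracket_R_middle, h.skew u z, bracket_middle_R_eq_zero h, neg_zero, add_zero] at hj
    exact eq_neg_of_add_eq_zero_left hj
  have hRz_left : br (br z u u) y u = br (br z y u) u u - br z (br y u u) u := by
    have hca := h.bracket_bracket_left z u u y u
    rw [h.skew u y u] at hca
    simp only [map_neg, LinearMap.neg_apply, h.bracket_middle_R_eq_zero, neg_zero,
      add_zero] at hca
    rw [hca]
    abel
  have hca := h.bracket_bracket_left x u (br z u u) y u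
  rw [h.bracket_middle_R_eq_zero, h.bracket_middle_R_eq_zero, h.skew u y u, hRz_left] at hca
  simpa [hRy_middle, h.bracket_middle_R_eq_zero] using hca.symm

theorem bracket_R_outer_eq_zero (h : IsCommAutomorphicLTS br) (u x y z : T) :
    br (br x u u) y (br z u u) = 0 := by
  rw [h.skew, h.bracket_R_R_right_eq_zero, neg_zero]

theorem bracket_R_R_left_eq_zero (h : IsCommAutomorphicLTS br) (u x y z : T) :
    br (br x u u) (br y u u) z = 0 := by
  simpa [h.bracket_R_outer_eq_zero, h.bracket_R_R_right_eq_zero] using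
    h.jacobi (br x u u) (br y u u) z

theorem isTripleDerivation_iterate_R (h : IsCommAutomorphicLTS br) (u : T) {n : ℕ}
    (hn : n ≠ 0) : IsTripleDerivation br (fun x => br x u u)^[n] :=
  (h.isTripleDerivation_R u u).iterate (fun x y => by simp) (h.bracket_R_R_left_eq_zero u)
    (h.bracket_R_outer_eq_zero u) (h.bracket_R_R_right_eq_zero u) hn

end IsCommAutomorphicLTS

end

theorem stmt_5_general {K T : Type*} [Field K] [AddCommGroup T] [Module K T]
    (br : T →ₗ[K] T →ₗ[K] T →ₗ[K] T)
    (skew : ∀ a b c : T, br a b c = - br b a c)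
    (jacobi : ∀ a b c : T, br a b c + br b c a + br c a b = 0)
    (ca : ∀ a b c a' b' : T,
      br (br a b c) a' b' = br (br a a' b') b c + br a (br b a' b') c + br a b (br c a' b'))
    (a' : T) (R : T → T) (hR : ∀ x : T, R x = br x a' a') :
    ∀ n : ℕ, 1 ≤ n → ∀ a b c : T,
      R^[n] (br a b c) = br (R^[n] a) b c + br a (R^[n] b) c + br a b (R^[n] c) := by
  obtain rfl : R = fun x => br x a' a' := funext hR
  have hT : IsCommAutomorphicLTS br := ⟨skew, jacobi, fun b c x y z => ca x y z b c⟩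
  exact fun n hn => hT.isTripleDerivation_iterate_R a' (Nat.one_le_iff_ne_zero.mp hn)

/-- For `R : x ↦ [x,a',a']`, every iterate `Rⁿ` (`n ≥ 1`) is a derivation of a
commutative automorphic Lie triple system over a field of characteristic zero. -/
theorem stmt_5 {K T : Type*} [Field K] [CharZero K] [AddCommGroup T] [Module K T]
    (br : T →ₗ[K] T →ₗ[K] T →ₗ[K] T)
    (skew : ∀ a b c : T, br a b c = - br b a c)
    (jacobi : ∀ a b c : T, br a b c + br b c a + br c a b = 0)
    (ca : ∀ a b c a' b' : T,
      br (br a b c) a' b' = br (br a a' b') b c + br a (br b a' b') c + br a b (br c a' b'))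
    (a' : T) (R : T → T) (hR : ∀ x : T, R x = br x a' a') :
    ∀ n : ℕ, 1 ≤ n → ∀ a b c : T,
      R^[n] (br a b c) = br (R^[n] a) b c + br a (R^[n] b) c + br a b (R^[n] c) :=
  stmt_5_general br skew jacobi ca a' R hR
end

section
/- In any commutative automorphic Lie triple system T over a field of characteristic zero, the operators R_{a',b'} and R_{a',a'} commute: for all a, a', b' ∈ T, [[a,a',b'],a',a'] = [[a,a',a'],a',b']. -/
theorem eq_zero_of_eq_neg {K M : Type*} [DivisionRing K] [NeZero (2 : K)] [AddCommGroup M]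
    [Module K M] {x : M} (h : x = -x) : x = 0 := by
  have two_smul_eq_zero : (2 : K) • x = 0 := by
    rw [two_smul]
    exact eq_neg_iff_add_eq_zero.mp h
  exact (smul_eq_zero_iff_right two_ne_zero).mp two_smul_eq_zero

theorem stmt_6_general {K T : Type*} [Field K] [CharZero K] [AddCommGroup T] [Module K T]
    (br : T →ₗ[K] T →ₗ[K] T →ₗ[K] T)
    (skew : ∀ a b c : T, br a b c = - br b a c)
    (ca : ∀ a b c a' b' : T,
      br (br a b c) a' b' = br (br a a' b') b c + br a (br b a' b') c + br a b (br c a' b'))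
    (a a' b' : T) :
    br (br a a' b') a' a' = br (br a a' a') a' b' := by
  -- Expanding `[[a,a',a'],a',b']` by identity (iii), the extra terms all contain `[a',a',b'] = 0`.
  have br_self : br a' a' b' = 0 := eq_zero_of_eq_neg (K := K) (skew a' a' b')
  simpa [br_self] using (ca a a' a' a' b').symm

/-- In any commutative automorphic Lie triple system over a field of
characteristic zero, the operators `R_{a',b'}` and `R_{a',a'}` commute. -/
theorem stmt_6 {K T : Type*} [Field K] [CharZero K] [AddCommGroup T] [Module K T]
    (br : T →ₗ[K] T →ₗ[K] T →ₗ[K] T)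
    (skew : ∀ a b c : T, br a b c = - br b a c)
    (jacobi : ∀ a b c : T, br a b c + br b c a + br c a b = 0)
    (ca : ∀ a b c a' b' : T,
      br (br a b c) a' b' = br (br a a' b') b c + br a (br b a' b') c + br a b (br c a' b'))
    (a a' b' : T) :
    br (br a a' b') a' a' = br (br a a' a') a' b' :=
  stmt_6_general br skew ca a a' b'
end

section
/- In any commutative automorphic Lie triple system T over a field of characteristic zero, for all a, a', b' ∈ T one has [[a,a',a'],b',a'] = [[a,a',b'],a',a'] (that is, R_{b',a'} ∘ R_{a',a'} = R_{a',a'} ∘ R_{a',b'}). -/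
/-!
Write `w = [b',a',a']`. Since `[y,y,z] = 0`, the commutative automorphic identity for
`[[x,y,y],y,z]` and for `[[x,y,z],y,y]` combine to `[x,y,[z,y,y]] = 0`. Expanding
`[[a,a',a'],b',a']` by the automorphic identity and `[a,a',b'] = [a,b',a'] - [a',b',a]` by the
Jacobi identity, both sides of the claim reduce to `[[a,b',a'],a',a']` minus `[a,w,a']` resp.
`[a',w,a]`, and these two agree by the Jacobi identity for `(w,a,a')`, whose middle term
`[a,a',w]` vanishes.
-/

namespace AutomorphicLieTripleSystem

variable {R T : Type*} [CommSemiring R] [AddCommGroup T] [Module R T]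
  {br : T →ₗ[R] T →ₗ[R] T →ₗ[R] T}

theorem bracket_self_left (skew : ∀ a b c : T, br a b c = - br b a c)
    (jacobi : ∀ a b c : T, br a b c + br b c a + br c a b = 0) (x z : T) :
    br x x z = 0 := by
  simpa [skew x z x] using jacobi x x z

theorem bracket_eq_sub (skew : ∀ a b c : T, br a b c = - br b a c)
    (jacobi : ∀ a b c : T, br a b c + br b c a + br c a b = 0) (x y z : T) :
    br x y z = br x z y - br y z x := by
  have h := jacobi x y z
  rw [skew z x y] at h
  linear_combination (norm := abel) h

theorem bracket_swap_of_bracket_eq_zero (skew : ∀ a b c : T, br a b c = - br b a c)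
    (jacobi : ∀ a b c : T, br a b c + br b c a + br c a b = 0) {x y w : T}
    (h : br x y w = 0) : br x w y = br y w x := by
  have hj := jacobi w x y
  rw [h, add_zero] at hj
  rw [skew x w y, eq_neg_of_add_eq_zero_left hj, neg_neg]

theorem bracket_bracket_self_eq_zero (skew : ∀ a b c : T, br a b c = - br b a c)
    (jacobi : ∀ a b c : T, br a b c + br b c a + br c a b = 0)
    (ca : ∀ a b c a' b' : T,
      br (br a b c) a' b' = br (br a a' b') b c + br a (br b a' b') c + br a b (br c a' b'))
    (x y z : T) : br x y (br z y y) = 0 := by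
  have h0 := bracket_self_left skew jacobi
  have e₁ := ca x y y y z
  have e₂ := ca x y z y y
  simp only [h0, map_zero, LinearMap.zero_apply, add_zero] at e₁ e₂
  rw [e₁] at e₂
  simpa using e₂.symm

end AutomorphicLieTripleSystem

open AutomorphicLieTripleSystem

theorem stmt_7_general {K T : Type*} [Field K] [AddCommGroup T] [Module K T]
    (br : T →ₗ[K] T →ₗ[K] T →ₗ[K] T)
    (skew : ∀ a b c : T, br a b c = - br b a c)
    (jacobi : ∀ a b c : T, br a b c + br b c a + br c a b = 0)
    (ca : ∀ a b c a' b' : T,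
      br (br a b c) a' b' = br (br a a' b') b c + br a (br b a' b') c + br a b (br c a' b'))
    (a a' b' : T) :
    br (br a a' a') b' a' = br (br a a' b') a' a' := by
  have hself := bracket_self_left skew jacobi
  have hvanish := bracket_bracket_self_eq_zero skew jacobi ca
  have hskew : br a' b' a' = - br b' a' a' := skew a' b' a'
  have lhs : br (br a a' a') b' a' = br (br a b' a') a' a' - br a (br b' a' a') a' := by
    rw [ca, hskew, map_neg, map_neg, hvanish, neg_zero, add_zero, LinearMap.neg_apply,
      sub_eq_add_neg]
  have rhs : br (br a' b' a) a' a' = br a' (br b' a' a') a := by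
    rw [ca, hself, skew a' b' (br a a' a'), hvanish]
    simp
  have swap : br a (br b' a' a') a' = br a' (br b' a' a') a :=
    bracket_swap_of_bracket_eq_zero skew jacobi (hvanish a a' b')
  rw [lhs, bracket_eq_sub skew jacobi a a' b', map_sub, LinearMap.sub_apply,
    LinearMap.sub_apply, rhs, swap]

/-- In any commutative automorphic Lie triple system over a field of
characteristic zero, `R_{b',a'} ∘ R_{a',a'} = R_{a',a'} ∘ R_{a',b'}`. -/
theorem stmt_7 {K T : Type*} [Field K] [CharZero K] [AddCommGroup T] [Module K T]
    (br : T →ₗ[K] T →ₗ[K] T →ₗ[K] T)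
    (skew : ∀ a b c : T, br a b c = - br b a c)
    (jacobi : ∀ a b c : T, br a b c + br b c a + br c a b = 0)
    (ca : ∀ a b c a' b' : T,
      br (br a b c) a' b' = br (br a a' b') b c + br a (br b a' b') c + br a b (br c a' b'))
    (a a' b' : T) :
    br (br a a' a') b' a' = br (br a a' b') a' a' :=
  stmt_7_general br skew jacobi ca a a' b'
end

section
/- In the algebra 𝔸, for every x ∈ 𝔸 and all y, z in the K-linear span of {a, b} one has c·x·y·z = c·x·z·y (in particular c·a·b = c·b·a), where c := a·b − b·a. Consequently, for any word w in a and b, the product c·w depends only on the number of a's and b's occurring in w. -/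
noncomputable section

/-- The first generator of the free algebra on two generators. -/
def Agen (K : Type*) [Field K] : FreeAlgebra K (Fin 2) := FreeAlgebra.ι K 0

/-- The second generator of the free algebra on two generators. -/
def Bgen (K : Type*) [Field K] : FreeAlgebra K (Fin 2) := FreeAlgebra.ι K 1

/-- The relations `a·a·b = a·b·a` and `b·b·a = b·a·b`. -/
inductive ARel (K : Type*) [Field K] :
    FreeAlgebra K (Fin 2) → FreeAlgebra K (Fin 2) → Prop
  | aab : ARel K (Agen K * Agen K * Bgen K) (Agen K * Bgen K * Agen K)
  | bba : ARel K (Bgen K * Bgen K * Agen K) (Bgen K * Agen K * Bgen K)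

/-- The algebra `𝔸`: the quotient of the free unital associative `K`-algebra on two
generators `a`, `b` by the two-sided ideal generated by `a·a·b − a·b·a` and
`b·b·a − b·a·b`. -/
abbrev AAlg (K : Type*) [Field K] := RingQuot (ARel K)

/-- The image of the generator `a` in `𝔸`. -/
def aA (K : Type*) [Field K] : AAlg K := RingQuot.mkAlgHom K (ARel K) (Agen K)

/-- The image of the generator `b` in `𝔸`. -/
def bA (K : Type*) [Field K] : AAlg K := RingQuot.mkAlgHom K (ARel K) (Bgen K)

/-- The commutator `c := a·b − b·a` in `𝔸`. -/
def cA (K : Type*) [Field K] : AAlg K := aA K * bA K - bA K * aA K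

/-- The product in `𝔸` of the word `w` in the letters `a` (for `0`) and `b` (for `1`). -/
def wordProd (K : Type*) [Field K] (w : List (Fin 2)) : AAlg K :=
  (w.map fun s => if s = 0 then aA K else bA K).prod

/-!
The relations say exactly that `a·c = 0 = b·c`. Hence `x·c = ε(x)·c` for the augmentation
`ε : 𝔸 → K` killing `a` and `b`, so `c·x·c = ε(x)·ε(c)·c = 0`, which expands to
`c·x·a·b = c·x·b·a`. The first claim follows by bilinearity; the second says that two
adjacent letters of a word standing after `c` may be swapped, so `c·w` is invariant under
permuting the letters of `w`.
-/

theorem mul_eq_smul_of_adjoin_eq_top {R A : Type*} [CommSemiring R] [Semiring A]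
    [Algebra R A] (ε : A →ₐ[R] R) {s : Set A}
    (hs : Algebra.adjoin R s = ⊤) {c : A} (hc : ∀ y ∈ s, y * c = ε y • c) (x : A) :
    x * c = ε x • c := by
  have hx : x ∈ Algebra.adjoin R s := hs ▸ Algebra.mem_top
  induction hx using Algebra.adjoin_induction with
  | mem y hy => exact hc y hy
  | algebraMap r => simp [Algebra.smul_def]
  | add y z _ _ hy hz => rw [add_mul, hy, hz, map_add, add_smul]
  | mul y z _ _ hy hz => rw [mul_assoc, hz, mul_smul_comm, hy, smul_smul, map_mul, mul_comm]

theorem mul_mul_comm_of_mem_span_pair {R A : Type*} [CommSemiring R] [Semiring A]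
    [Algebra R A] {a b u y z : A} (h : u * a * b = u * b * a)
    (hy : y ∈ Submodule.span R {a, b}) (hz : z ∈ Submodule.span R {a, b}) :
    u * y * z = u * z * y := by
  obtain ⟨α, β, rfl⟩ := Submodule.mem_span_pair.mp hy
  obtain ⟨γ, δ, rfl⟩ := Submodule.mem_span_pair.mp hz
  simp only [mul_add, add_mul, mul_smul_comm, smul_mul_assoc, h]
  module

theorem List.Perm.mul_prod_map_eq {α M : Type*} [Monoid M] {c : M} {f : α → M}
    (hcomm : ∀ u i j, c * u * f i * f j = c * u * f j * f i) {l₁ l₂ : List α}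
    (h : l₁.Perm l₂) (u : M) :
    c * u * (l₁.map f).prod = c * u * (l₂.map f).prod := by
  induction h generalizing u with
  | nil => rfl
  | cons i _ ih => simpa only [List.map_cons, List.prod_cons, ← mul_assoc] using ih (u * f i)
  | swap i j l =>
    simp only [List.map_cons, List.prod_cons, ← mul_assoc]
    rw [hcomm]
  | trans _ _ ih₁ ih₂ => exact (ih₁ u).trans (ih₂ u)

namespace AAlg

variable (K : Type*) [Field K]

theorem adjoin_aA_bA : Algebra.adjoin K {aA K, bA K} = ⊤ := by
  have hlift : FreeAlgebra.lift K (fun i => RingQuot.mkAlgHom K (ARel K) (FreeAlgebra.ι K i)) =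
      RingQuot.mkAlgHom K (ARel K) :=
    FreeAlgebra.hom_ext (funext fun _ ↦ FreeAlgebra.lift_ι_apply _ _)
  have hrange : Set.range (fun i => RingQuot.mkAlgHom K (ARel K) (FreeAlgebra.ι K i)) =
      {aA K, bA K} := by
    ext; simp [Fin.exists_fin_two, aA, bA, Agen, Bgen, eq_comm]
  rw [← hrange, Algebra.adjoin_range_eq_range_freeAlgebra_lift, hlift, AlgHom.range_eq_top]
  exact RingQuot.mkAlgHom_surjective K (ARel K)

def augmentation : AAlg K →ₐ[K] K :=
  RingQuot.liftAlgHom K ⟨FreeAlgebra.lift K 0, by rintro _ _ ⟨⟩ <;> simp [Agen, Bgen]⟩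

theorem augmentation_aA : augmentation K (aA K) = 0 := by
  simp [augmentation, aA, Agen]

theorem augmentation_bA : augmentation K (bA K) = 0 := by
  simp [augmentation, bA, Bgen]

theorem augmentation_cA : augmentation K (cA K) = 0 := by
  simp [cA, augmentation_aA, augmentation_bA]

theorem aA_mul_cA : aA K * cA K = 0 := by
  have h := RingQuot.mkAlgHom_rel K (ARel.aab (K := K))
  simp only [map_mul] at h
  simp only [cA, mul_sub, ← mul_assoc, aA, bA, h, sub_self]

theorem bA_mul_cA : bA K * cA K = 0 := by
  have h := RingQuot.mkAlgHom_rel K (ARel.bba (K := K))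
  simp only [map_mul] at h
  simp only [cA, mul_sub, ← mul_assoc, aA, bA, h, sub_self]

theorem mul_cA (x : AAlg K) : x * cA K = augmentation K x • cA K := by
  refine mul_eq_smul_of_adjoin_eq_top _ (adjoin_aA_bA K) ?_ x
  rintro y (rfl | rfl)
  · rw [aA_mul_cA, augmentation_aA, zero_smul]
  · rw [bA_mul_cA, augmentation_bA, zero_smul]

theorem cA_mul_mul_cA (x : AAlg K) : cA K * x * cA K = 0 := by
  rw [mul_assoc, mul_cA, mul_smul_comm, mul_cA, augmentation_cA, zero_smul, smul_zero]

theorem cA_mul_mul_aA_mul_bA (x : AAlg K) : cA K * x * aA K * bA K = cA K * x * bA K * aA K := by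
  have h : cA K * x * (aA K * bA K - bA K * aA K) = 0 := cA_mul_mul_cA K x
  rwa [mul_sub, sub_eq_zero, ← mul_assoc, ← mul_assoc] at h

theorem cA_mul_wordProd_eq_of_perm {w₁ w₂ : List (Fin 2)} (h : w₁.Perm w₂) :
    cA K * wordProd K w₁ = cA K * wordProd K w₂ := by
  have := h.mul_prod_map_eq (c := cA K) (f := fun s ↦ if s = 0 then aA K else bA K)
    (fun u i j ↦ by fin_cases i <;> fin_cases j <;> simp [cA_mul_mul_aA_mul_bA]) 1
  simpa [wordProd] using this

end AAlg

theorem stmt_11_general (K : Type*) [Field K] :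
    (∀ x : AAlg K, ∀ y ∈ Submodule.span K {aA K, bA K},
      ∀ z ∈ Submodule.span K {aA K, bA K}, cA K * x * y * z = cA K * x * z * y) ∧
    (cA K * aA K * bA K = cA K * bA K * aA K) ∧
    (∀ w₁ w₂ : List (Fin 2), w₁.count 0 = w₂.count 0 → w₁.count 1 = w₂.count 1 →
      cA K * wordProd K w₁ = cA K * wordProd K w₂) := by
  refine ⟨fun x y hy z hz ↦ ?_, ?_, fun w₁ w₂ h₀ h₁ ↦ ?_⟩
  · exact mul_mul_comm_of_mem_span_pair (AAlg.cA_mul_mul_aA_mul_bA K x) hy hz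
  · simpa using AAlg.cA_mul_mul_aA_mul_bA K 1
  · exact AAlg.cA_mul_wordProd_eq_of_perm K
      (List.perm_iff_count.mpr (Fin.forall_fin_two.mpr ⟨h₀, h₁⟩))

/-- In `𝔸`, `c·x·y·z = c·x·z·y` for every `x ∈ 𝔸` and all `y, z` in the span of
`{a, b}` (in particular `c·a·b = c·b·a`); consequently `c·w` only depends on the number of
`a`'s and `b`'s occurring in the word `w`. -/
theorem stmt_11 (K : Type*) [Field K] [CharZero K] :
    (∀ x : AAlg K, ∀ y ∈ Submodule.span K {aA K, bA K},
      ∀ z ∈ Submodule.span K {aA K, bA K}, cA K * x * y * z = cA K * x * z * y) ∧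
    (cA K * aA K * bA K = cA K * bA K * aA K) ∧
    (∀ w₁ w₂ : List (Fin 2), w₁.count 0 = w₂.count 0 → w₁.count 1 = w₂.count 1 →
      cA K * wordProd K w₁ = cA K * wordProd K w₂) :=
  stmt_11_general K
end
end

section
/- Let T be the K-linear span in 𝔸 of the set {a, b} ∪ {c·aⁱ·bʲ : i, j ≥ 0, i + j odd}, where c := a·b − b·a. Then T is closed under the double commutator triple product [x,y,z] := [[x,y],z] (with [x,y] := xy − yx), and (T, [·,·,·]) is a commutative automorphic Lie triple system: for all x, y, z, x', y' ∈ T, [x,y,z] = −[y,x,z], [x,y,z] + [y,z,x] + [z,x,y] = 0, and [[x,y,z],x',y'] = [[x,x',y'],y,z] + [x,[y,x',y'],z] + [x,y,[z,x',y']]. -/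
/-!
In `𝔸` the defining relations say exactly that `a c = b c = 0`. Put `V = span {a, b}` and
`N = span {c aⁱ bʲ}`. Then `V N = N N = 0`, `N V ⊆ N` and `[V, V] ⊆ K c ⊆ N`; moreover
`[s,t] u + [t,u] s + [u,s] t = 0` on `V`, because `V` is spanned by two elements.

These properties alone give, for `x, y, z ∈ V + N`, that `[x,y] ∈ N` and `[[x,y],z] = [x,y] z`,
and that right multiplications by elements of `V + N` commute on `N` (their commutator lies in
`N`, and `N N = 0`). Every iterated triple product is therefore an element of `N` times commuting
factors, and the derivation identity becomes the identity above for `x, y, x'`, multiplied on the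
right by `z y'`. `T` is closed because right multiplication by `V` flips the parity of `i + j`,
while `[T, T]` lands in the even part of `N`.
-/

noncomputable section

/-- The `K`-span in `𝔸` of `{a, b} ∪ {c·aⁱ·bʲ : i + j odd}`. -/
def TSpan (K : Type*) [Field K] : Submodule K (AAlg K) :=
  Submodule.span K
    ({aA K, bA K} ∪ {w | ∃ i j : ℕ, Odd (i + j) ∧ w = cA K * (aA K) ^ i * (bA K) ^ j})

/-- The double commutator triple product `[x,y,z] := [[x,y],z]`. -/
def dcomm {R : Type*} [Ring R] (x y z : R) : R :=
  (x * y - y * x) * z - z * (x * y - y * x)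

open Submodule

section SpanPair

variable {K A : Type*} [CommRing K] [Ring A] [Algebra K A]

theorem mul_mem_of_mem_span {S T : Set A} {P : Submodule K A}
    (h : ∀ x ∈ S, ∀ y ∈ T, x * y ∈ P) {x y : A} (hx : x ∈ span K S)
    (hy : y ∈ span K T) : x * y ∈ P := by
  have hST : span K S * span K T ≤ P := by
    rw [span_mul_span, span_le]
    exact Set.mul_subset_iff.mpr h
  exact hST (mul_mem_mul hx hy)

theorem lie_smul_add_smul (a b : A) (α β γ δ : K) :
    ⁅α • a + β • b, γ • a + δ • b⁆ = (α * δ - β * γ) • ⁅a, b⁆ := by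
  simp only [Ring.lie_def, add_mul, mul_add, smul_mul_smul]
  module

variable {a b s t u : A}

theorem lie_mem_of_mem_span_pair {P : Submodule K A} (hab : ⁅a, b⁆ ∈ P)
    (hs : s ∈ span K {a, b}) (ht : t ∈ span K {a, b}) : ⁅s, t⁆ ∈ P := by
  obtain ⟨α, β, rfl⟩ := mem_span_pair.mp hs
  obtain ⟨γ, δ, rfl⟩ := mem_span_pair.mp ht
  rw [lie_smul_add_smul]
  exact P.smul_mem _ hab

/-- Three vectors in a plane are linearly dependent, with the `2 × 2` minors as coefficients. -/
theorem lie_mul_add_lie_mul_add_lie_mul_of_mem_span_pair (hs : s ∈ span K {a, b})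
    (ht : t ∈ span K {a, b}) (hu : u ∈ span K {a, b}) :
    ⁅s, t⁆ * u + ⁅t, u⁆ * s + ⁅u, s⁆ * t = 0 := by
  obtain ⟨α, β, rfl⟩ := mem_span_pair.mp hs
  obtain ⟨γ, δ, rfl⟩ := mem_span_pair.mp ht
  obtain ⟨ε, ζ, rfl⟩ := mem_span_pair.mp hu
  simp only [lie_smul_add_smul, smul_mul_assoc, mul_add, mul_smul_comm, smul_smul]
  module

end SpanPair

structure IsCommutatorModule {K R : Type*} [Ring K] [Ring R] [Module K R]
    (V N : Submodule K R) : Prop where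
  mul_eq_zero_left : ∀ v ∈ V, ∀ m ∈ N, v * m = 0
  mul_eq_zero : ∀ m ∈ N, ∀ n ∈ N, m * n = 0
  mul_mem : ∀ m ∈ N, ∀ v ∈ V, m * v ∈ N
  lie_mem : ∀ u ∈ V, ∀ v ∈ V, ⁅u, v⁆ ∈ N
  jacobi : ∀ s ∈ V, ∀ t ∈ V, ∀ u ∈ V, ⁅s, t⁆ * u + ⁅t, u⁆ * s + ⁅u, s⁆ * t = 0

namespace IsCommutatorModule

variable {K R : Type*} [Ring K] [Ring R] [Module K R] {V N : Submodule K R}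
  {m p q s t x y z x' y' : R}

theorem mul_eq_zero_of_mem_sup (h : IsCommutatorModule V N) (hx : x ∈ V ⊔ N) (hm : m ∈ N) :
    x * m = 0 := by
  obtain ⟨v, hv, n, hn, rfl⟩ := mem_sup.mp hx
  rw [add_mul, h.mul_eq_zero_left v hv m hm, h.mul_eq_zero n hn m hm, add_zero]

theorem lie_add_add (h : IsCommutatorModule V N) (hs : s ∈ V) (hp : p ∈ N) (ht : t ∈ V)
    (hq : q ∈ N) : ⁅s + p, t + q⁆ = ⁅s, t⁆ + p * t - q * s := by
  simp only [Ring.lie_def, add_mul, mul_add, h.mul_eq_zero_left s hs q hq,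
    h.mul_eq_zero_left t ht p hp, h.mul_eq_zero p hp q hq, h.mul_eq_zero q hq p hp]
  abel

theorem mul_mem_of_mem_sup (h : IsCommutatorModule V N) {P Q : Submodule K R} (hP : P ≤ N)
    (hPQ : ∀ p ∈ P, ∀ v ∈ V, p * v ∈ Q) (hm : m ∈ P) (hx : x ∈ V ⊔ N) : m * x ∈ Q := by
  obtain ⟨v, hv, n, hn, rfl⟩ := mem_sup.mp hx
  rw [mul_add, h.mul_eq_zero m (hP hm) n hn, add_zero]
  exact hPQ m hm v hv

theorem lie_mem_of_mem_sup (h : IsCommutatorModule V N) {P Q : Submodule K R} (hP : P ≤ N)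
    (hPQ : ∀ p ∈ P, ∀ v ∈ V, p * v ∈ Q) (hVQ : ∀ u ∈ V, ∀ v ∈ V, ⁅u, v⁆ ∈ Q)
    (hx : x ∈ V ⊔ P) (hy : y ∈ V ⊔ P) : ⁅x, y⁆ ∈ Q := by
  obtain ⟨s, hs, p, hp, rfl⟩ := mem_sup.mp hx
  obtain ⟨t, ht, q, hq, rfl⟩ := mem_sup.mp hy
  rw [h.lie_add_add hs (hP hp) ht (hP hq)]
  exact sub_mem (add_mem (hVQ s hs t ht) (hPQ p hp t ht)) (hPQ q hq s hs)

theorem mul_mem_sup (h : IsCommutatorModule V N) (hm : m ∈ N) (hx : x ∈ V ⊔ N) : m * x ∈ N :=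
  h.mul_mem_of_mem_sup le_rfl h.mul_mem hm hx

theorem lie_mem_sup (h : IsCommutatorModule V N) (hx : x ∈ V ⊔ N) (hy : y ∈ V ⊔ N) :
    ⁅x, y⁆ ∈ N :=
  h.lie_mem_of_mem_sup le_rfl h.mul_mem h.lie_mem hx hy

theorem lie_eq_mul (h : IsCommutatorModule V N) (hm : m ∈ N) (hx : x ∈ V ⊔ N) :
    ⁅m, x⁆ = m * x := by
  rw [Ring.lie_def, h.mul_eq_zero_of_mem_sup hx hm, sub_zero]

theorem lie_eq_neg_mul (h : IsCommutatorModule V N) (hx : x ∈ V ⊔ N) (hm : m ∈ N) :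
    ⁅x, m⁆ = -(m * x) := by
  rw [Ring.lie_def, h.mul_eq_zero_of_mem_sup hx hm, zero_sub]

theorem lie_lie_eq_lie_mul (h : IsCommutatorModule V N) (hx : x ∈ V ⊔ N) (hy : y ∈ V ⊔ N)
    (hz : z ∈ V ⊔ N) : ⁅⁅x, y⁆, z⁆ = ⁅x, y⁆ * z :=
  h.lie_eq_mul (h.lie_mem_sup hx hy) hz

theorem mul_mul_comm (h : IsCommutatorModule V N) (hm : m ∈ N) (hx : x ∈ V ⊔ N)
    (hy : y ∈ V ⊔ N) : m * x * y = m * y * x := by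
  have := h.mul_eq_zero m hm _ (h.lie_mem_sup hx hy)
  rwa [Ring.lie_def, mul_sub, sub_eq_zero, ← mul_assoc, ← mul_assoc] at this

theorem mul_mul_mul_rotate (h : IsCommutatorModule V N) (hm : m ∈ N) (hx : x ∈ V ⊔ N)
    (hy : y ∈ V ⊔ N) (hz : z ∈ V ⊔ N) : m * x * y * z = m * y * z * x := by
  rw [h.mul_mul_comm hm hx hy, h.mul_mul_comm (h.mul_mem_sup hm hy) hx hz]

theorem jacobi_sup (h : IsCommutatorModule V N) (hx : x ∈ V ⊔ N) (hy : y ∈ V ⊔ N)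
    (hz : z ∈ V ⊔ N) : ⁅x, y⁆ * z + ⁅y, z⁆ * x + ⁅z, x⁆ * y = 0 := by
  have expand {s p t q u r} (hs : s ∈ V) (hp : p ∈ N) (ht : t ∈ V) (hq : q ∈ N) (hr : r ∈ N) :
      ⁅s + p, t + q⁆ * (u + r) = ⁅s, t⁆ * u + p * t * u - q * s * u := by
    rw [mul_add, h.mul_eq_zero _ (h.lie_mem_sup (add_mem_sup hs hp) (add_mem_sup ht hq)) r hr,
      add_zero, h.lie_add_add hs hp ht hq, sub_mul, add_mul]
  obtain ⟨s, hs, p, hp, rfl⟩ := mem_sup.mp hx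
  obtain ⟨t, ht, q, hq, rfl⟩ := mem_sup.mp hy
  obtain ⟨u, hu, r, hr, rfl⟩ := mem_sup.mp hz
  rw [expand hs hp ht hq hr, expand ht hq hu hr hp, expand hu hr hs hp hq,
    h.mul_mul_comm hp (mem_sup_left hu) (mem_sup_left ht),
    h.mul_mul_comm hq (mem_sup_left hu) (mem_sup_left hs),
    h.mul_mul_comm hr (mem_sup_left ht) (mem_sup_left hs), ← h.jacobi s hs t ht u hu]
  abel

theorem lie_lie_lie_lie_eq (h : IsCommutatorModule V N) (hx : x ∈ V ⊔ N) (hy : y ∈ V ⊔ N)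
    (hz : z ∈ V ⊔ N) (hx' : x' ∈ V ⊔ N) (hy' : y' ∈ V ⊔ N) :
    ⁅⁅⁅⁅x, y⁆, z⁆, x'⁆, y'⁆ =
      ⁅⁅⁅⁅x, x'⁆, y'⁆, y⁆, z⁆ + ⁅⁅x, ⁅⁅y, x'⁆, y'⁆⁆, z⁆ + ⁅⁅x, y⁆, ⁅⁅z, x'⁆, y'⁆⁆ := by
  have hxy := h.lie_mem_sup hx hy
  have hxx' := h.lie_mem_sup hx hx'
  have hyx' := h.lie_mem_sup hy hx'
  have hzx' := h.lie_mem_sup hz hx'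
  have lhs : ⁅⁅⁅⁅x, y⁆, z⁆, x'⁆, y'⁆ = ⁅x, y⁆ * x' * z * y' := by
    rw [h.lie_lie_eq_lie_mul hx hy hz, h.lie_eq_mul (h.mul_mem_sup hxy hz) hx',
      h.lie_eq_mul (h.mul_mem_sup (h.mul_mem_sup hxy hz) hx') hy', h.mul_mul_comm hxy hz hx']
  have rhs₁ : ⁅⁅⁅⁅x, x'⁆, y'⁆, y⁆, z⁆ = ⁅x, x'⁆ * y * z * y' := by
    rw [h.lie_lie_eq_lie_mul hx hx' hy', h.lie_eq_mul (h.mul_mem_sup hxx' hy') hy,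
      h.lie_eq_mul (h.mul_mem_sup (h.mul_mem_sup hxx' hy') hy) hz,
      h.mul_mul_mul_rotate hxx' hy' hy hz]
  have rhs₂ : ⁅⁅x, ⁅⁅y, x'⁆, y'⁆⁆, z⁆ = -(⁅y, x'⁆ * x * z * y') := by
    rw [h.lie_lie_eq_lie_mul hy hx' hy', h.lie_eq_neg_mul hx (h.mul_mem_sup hyx' hy'),
      h.lie_eq_mul (neg_mem (h.mul_mem_sup (h.mul_mem_sup hyx' hy') hx)) hz, neg_mul,
      h.mul_mul_mul_rotate hyx' hy' hx hz]
  have rhs₃ : ⁅⁅x, y⁆, ⁅⁅z, x'⁆, y'⁆⁆ = 0 := by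
    rw [h.lie_lie_eq_lie_mul hz hx' hy',
      h.lie_eq_mul hxy (mem_sup_right (h.mul_mem_sup hzx' hy')),
      h.mul_eq_zero _ hxy _ (h.mul_mem_sup hzx' hy')]
  have jac := congrArg (· * z * y') (h.jacobi_sup hx hy hx')
  have skew : ⁅x', x⁆ = -⁅x, x'⁆ := by rw [Ring.lie_def, Ring.lie_def, neg_sub]
  simp only [add_mul, zero_mul, skew, neg_mul] at jac
  rw [lhs, rhs₁, rhs₂, rhs₃, add_zero, ← sub_eq_zero, ← jac]
  abel

end IsCommutatorModule

section QuotientAlgebra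

variable (K : Type*) [Field K]

theorem aA_mul_cA : aA K * cA K = 0 := by
  have h := RingQuot.mkAlgHom_rel K (ARel.aab (K := K))
  simp only [map_mul] at h
  rw [cA, mul_sub, ← mul_assoc, ← mul_assoc, aA, bA, h, sub_self]

theorem bA_mul_cA : bA K * cA K = 0 := by
  have h := RingQuot.mkAlgHom_rel K (ARel.bba (K := K))
  simp only [map_mul] at h
  rw [cA, mul_sub, ← mul_assoc, ← mul_assoc, aA, bA, h, sub_self]

theorem cA_mul_cA : cA K * cA K = 0 := by
  conv_lhs => enter [1]; rw [cA]
  rw [sub_mul, mul_assoc, mul_assoc, aA_mul_cA, bA_mul_cA, mul_zero, mul_zero, sub_self]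

theorem cA_mul_pow_mul_pow_mul_cA (i j : ℕ) : cA K * aA K ^ i * bA K ^ j * cA K = 0 := by
  rcases j with _ | j
  · rcases i with _ | i
    · simpa using cA_mul_cA K
    · simp only [pow_zero, mul_one, pow_succ, mul_assoc, aA_mul_cA, mul_zero]
  · simp only [pow_succ, mul_assoc, bA_mul_cA, mul_zero]

theorem mul_bA_mul_aA {m : AAlg K} (hm : m * cA K = 0) :
    m * bA K * aA K = m * aA K * bA K := by
  rw [cA, mul_sub, sub_eq_zero] at hm
  rw [mul_assoc, mul_assoc, hm]

theorem cA_mul_pow_mul_pow_mul_aA (i j : ℕ) :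
    cA K * aA K ^ i * bA K ^ j * aA K = cA K * aA K ^ (i + 1) * bA K ^ j := by
  induction j with
  | zero => simp only [pow_zero, mul_one, pow_succ, mul_assoc]
  | succ j ih =>
    rw [pow_succ, ← mul_assoc, mul_bA_mul_aA K (cA_mul_pow_mul_pow_mul_cA K i j), ih, mul_assoc,
      ← pow_succ]

def cSpan (P : ℕ → Prop) : Submodule K (AAlg K) :=
  span K {w | ∃ i j : ℕ, P (i + j) ∧ w = cA K * aA K ^ i * bA K ^ j}

theorem TSpan_eq : TSpan K = span K {aA K, bA K} ⊔ cSpan K Odd := by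
  rw [TSpan, span_union]
  rfl

variable {K}

theorem cSpan_mono {P Q : ℕ → Prop} (hPQ : ∀ n, P n → Q n) : cSpan K P ≤ cSpan K Q :=
  span_mono fun _ ⟨i, j, hij, hw⟩ => ⟨i, j, hPQ _ hij, hw⟩

theorem mul_mem_cSpan {P Q : ℕ → Prop} (hPQ : ∀ n, P n → Q (n + 1)) :
    ∀ m ∈ cSpan K P, ∀ v ∈ span K {aA K, bA K}, m * v ∈ cSpan K Q := by
  refine fun m hm v hv => mul_mem_of_mem_span ?_ hm hv
  rintro _ ⟨i, j, hij, rfl⟩ _ (rfl | rfl)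
  · rw [cA_mul_pow_mul_pow_mul_aA]
    exact subset_span ⟨i + 1, j, by rw [add_right_comm]; exact hPQ _ hij, rfl⟩
  · rw [mul_assoc _ (bA K ^ j), ← pow_succ]
    exact subset_span ⟨i, j + 1, hPQ _ hij, rfl⟩

theorem mul_eq_zero_of_mem_cSpan {P : ℕ → Prop} {S : Set (AAlg K)} (hS : ∀ x ∈ S, x * cA K = 0)
    {x m : AAlg K} (hx : x ∈ span K S) (hm : m ∈ cSpan K P) : x * m = 0 := by
  refine (mem_bot K).mp (mul_mem_of_mem_span ?_ hx hm)
  rintro x hx _ ⟨i, j, -, rfl⟩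
  rw [← mul_assoc, ← mul_assoc, hS x hx, zero_mul, zero_mul]
  exact zero_mem _

theorem lie_mem_cSpan {P : ℕ → Prop} (hP : P 0) :
    ∀ u ∈ span K {aA K, bA K}, ∀ v ∈ span K {aA K, bA K},
      ⁅u, v⁆ ∈ cSpan K P :=
  fun _ hu _ hv => lie_mem_of_mem_span_pair
    (subset_span ⟨0, 0, hP, by simp [cA, Ring.lie_def]⟩) hu hv

theorem TSpan_le : TSpan K ≤ span K {aA K, bA K} ⊔ cSpan K fun _ => True :=
  TSpan_eq K ▸ sup_le_sup_left (cSpan_mono fun _ _ => trivial) _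

theorem isCommutatorModule :
    IsCommutatorModule (span K {aA K, bA K}) (cSpan K fun _ => True) where
  mul_eq_zero_left _ hv _ hm := mul_eq_zero_of_mem_cSpan
    (by rintro _ (rfl | rfl); exacts [aA_mul_cA K, bA_mul_cA K]) hv hm
  mul_eq_zero _ hn _ hm := mul_eq_zero_of_mem_cSpan
    (by rintro _ ⟨i, j, -, rfl⟩; exact cA_mul_pow_mul_pow_mul_cA K i j) hn hm
  mul_mem := mul_mem_cSpan fun _ _ => trivial
  lie_mem := lie_mem_cSpan trivial
  jacobi _ hs _ ht _ hu := lie_mul_add_lie_mul_add_lie_mul_of_mem_span_pair hs ht hu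

end QuotientAlgebra

theorem stmt_13_general (K : Type*) [Field K] :
    (∀ x ∈ TSpan K, ∀ y ∈ TSpan K, ∀ z ∈ TSpan K, dcomm x y z ∈ TSpan K) ∧
    (∀ x ∈ TSpan K, ∀ y ∈ TSpan K, ∀ z ∈ TSpan K, dcomm x y z = - dcomm y x z) ∧
    (∀ x ∈ TSpan K, ∀ y ∈ TSpan K, ∀ z ∈ TSpan K,
      dcomm x y z + dcomm y z x + dcomm z x y = 0) ∧
    (∀ x ∈ TSpan K, ∀ y ∈ TSpan K, ∀ z ∈ TSpan K, ∀ x' ∈ TSpan K, ∀ y' ∈ TSpan K,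
      dcomm (dcomm x y z) x' y'
        = dcomm (dcomm x x' y') y z + dcomm x (dcomm y x' y') z
          + dcomm x y (dcomm z x' y')) := by
  have h := isCommutatorModule (K := K)
  have hT := TSpan_le (K := K)
  refine ⟨fun x hx y hy z hz => ?_,
    fun x _ y _ z _ => by simp only [dcomm, mul_sub, sub_mul, mul_assoc]; abel,
    fun x _ y _ z _ => by simp only [dcomm, mul_sub, sub_mul, mul_assoc]; abel,
    fun x hx y hy z hz x' hx' y' hy' =>
      h.lie_lie_lie_lie_eq (hT hx) (hT hy) (hT hz) (hT hx') (hT hy')⟩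
  have hxy : ⁅x, y⁆ ∈ cSpan K Even := by
    rw [TSpan_eq] at hx hy
    exact h.lie_mem_of_mem_sup (cSpan_mono fun _ _ => trivial)
      (mul_mem_cSpan fun _ => Odd.add_one) (lie_mem_cSpan ⟨0, rfl⟩) hx hy
  change ⁅⁅x, y⁆, z⁆ ∈ TSpan K
  rw [h.lie_lie_eq_lie_mul (hT hx) (hT hy) (hT hz), TSpan_eq]
  exact mem_sup_right (h.mul_mem_of_mem_sup (cSpan_mono fun _ _ => trivial)
    (mul_mem_cSpan fun _ => Even.add_one) hxy (hT hz))

/-- `T` is closed under the double-commutator triple product and is a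
commutative automorphic Lie triple system. -/
theorem stmt_13 (K : Type*) [Field K] [CharZero K] :
    (∀ x ∈ TSpan K, ∀ y ∈ TSpan K, ∀ z ∈ TSpan K, dcomm x y z ∈ TSpan K) ∧
    (∀ x ∈ TSpan K, ∀ y ∈ TSpan K, ∀ z ∈ TSpan K, dcomm x y z = - dcomm y x z) ∧
    (∀ x ∈ TSpan K, ∀ y ∈ TSpan K, ∀ z ∈ TSpan K,
      dcomm x y z + dcomm y z x + dcomm z x y = 0) ∧
    (∀ x ∈ TSpan K, ∀ y ∈ TSpan K, ∀ z ∈ TSpan K, ∀ x' ∈ TSpan K, ∀ y' ∈ TSpan K,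
      dcomm (dcomm x y z) x' y'
        = dcomm (dcomm x x' y') y z + dcomm x (dcomm y x' y') z
          + dcomm x y (dcomm z x' y')) :=
  stmt_13_general K
end
end

section
/- In M₃(K), the two-dimensional subspace T₃ spanned by u := E₁₃ and v := −E₁₂ − E₂₁ is closed under the triple product [x,y,z] := (1/4)[[x,y],z], one has [v,u,u] = 0 and [v,u,v] = −(1/4)u, and (T₃, [·,·,·]) is a commutative automorphic Lie triple system: for all x, y, z, x', y' ∈ T₃, [x,y,z] = −[y,x,z], [x,y,z] + [y,z,x] + [z,x,y] = 0, and [[x,y,z],x',y'] = [[x,x',y'],y,z] + [x,[y,x',y'],z] + [x,y,[z,x',y']]. -/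
noncomputable section

/-- `u := E₁₃` in `M₃(K)`. -/
def uMat (K : Type*) [Field K] : Matrix (Fin 3) (Fin 3) K :=
  Matrix.single 0 2 1

/-- `v := −E₁₂ − E₂₁` in `M₃(K)`. -/
def vMat (K : Type*) [Field K] : Matrix (Fin 3) (Fin 3) K :=
  - Matrix.single 0 1 1 - Matrix.single 1 0 1

/-- The triple product `[x,y,z] := (1/4)[[x,y],z]` on `M₃(K)`. -/
def trip {K : Type*} [Field K] (x y z : Matrix (Fin 3) (Fin 3) K) :
    Matrix (Fin 3) (Fin 3) K :=
  (4 : K)⁻¹ • ((x * y - y * x) * z - z * (x * y - y * x))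

/-!
An element of `T₃ = span {u, v}` is `x = a u + b v` with `a = x 0 2` and `b = - x 1 0`.
In these coordinates `[x, y] = (a d - b c) E₂₃` and `[E₂₃, z] = f u`, so every triple product is
`(1/4) (a d - b c) f u`, a multiple of `u`. All identities of a Lie triple system then reduce to
polynomial identities in the coordinates.
-/

section

variable {K : Type*} [Field K] {x y z : Matrix (Fin 3) (Fin 3) K}

local notation "T₃" => Submodule.span K {uMat K, vMat K}

theorem uMat_mem_span : uMat K ∈ T₃ := Submodule.subset_span (by simp)

theorem vMat_mem_span : vMat K ∈ T₃ := Submodule.subset_span (by simp)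

@[simp]
theorem smul_uMat_apply_zero_two (s : K) : (s • uMat K) 0 2 = s := by simp [uMat]

@[simp]
theorem smul_uMat_apply_one_zero (s : K) : (s • uMat K) 1 0 = 0 := by simp [uMat]

theorem commutator_eq_of_mem_span (hx : x ∈ T₃) (hy : y ∈ T₃) :
    x * y - y * x = (x 1 0 * y 0 2 - x 0 2 * y 1 0) • Matrix.single 1 2 1 := by
  obtain ⟨a, b, rfl⟩ := Submodule.mem_span_pair.mp hx
  obtain ⟨c, d, rfl⟩ := Submodule.mem_span_pair.mp hy
  ext i j
  fin_cases i <;> fin_cases j <;>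
    simp [uMat, vMat, Matrix.mul_apply, Matrix.single_apply] <;> ring

theorem single_commutator_eq_of_mem_span (hz : z ∈ T₃) :
    Matrix.single 1 2 1 * z - z * Matrix.single 1 2 1 = -z 1 0 • uMat K := by
  obtain ⟨e, f, rfl⟩ := Submodule.mem_span_pair.mp hz
  ext i j
  fin_cases i <;> fin_cases j <;>
    simp [uMat, vMat, Matrix.mul_apply, Matrix.single_apply]

theorem trip_eq_of_mem_span (hx : x ∈ T₃) (hy : y ∈ T₃) (hz : z ∈ T₃) :
    trip x y z = ((4 : K)⁻¹ * (x 0 2 * y 1 0 - x 1 0 * y 0 2) * z 1 0) • uMat K := by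
  rw [trip, commutator_eq_of_mem_span hx hy, smul_mul_assoc, mul_smul_comm, ← smul_sub,
    single_commutator_eq_of_mem_span hz, smul_smul, smul_smul]
  congr 1
  ring

theorem trip_mem_span (hx : x ∈ T₃) (hy : y ∈ T₃) (hz : z ∈ T₃) : trip x y z ∈ T₃ := by
  rw [trip_eq_of_mem_span hx hy hz]
  exact Submodule.smul_mem _ _ uMat_mem_span

end

theorem stmt_16_general (K : Type*) [Field K] :
    (∀ x ∈ Submodule.span K {uMat K, vMat K}, ∀ y ∈ Submodule.span K {uMat K, vMat K},
      ∀ z ∈ Submodule.span K {uMat K, vMat K},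
        trip x y z ∈ Submodule.span K {uMat K, vMat K}) ∧
    trip (vMat K) (uMat K) (uMat K) = 0 ∧
    trip (vMat K) (uMat K) (vMat K) = - ((4 : K)⁻¹ • uMat K) ∧
    (∀ x ∈ Submodule.span K {uMat K, vMat K}, ∀ y ∈ Submodule.span K {uMat K, vMat K},
      ∀ z ∈ Submodule.span K {uMat K, vMat K}, trip x y z = - trip y x z) ∧
    (∀ x ∈ Submodule.span K {uMat K, vMat K}, ∀ y ∈ Submodule.span K {uMat K, vMat K},
      ∀ z ∈ Submodule.span K {uMat K, vMat K},
        trip x y z + trip y z x + trip z x y = 0) ∧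
    (∀ x ∈ Submodule.span K {uMat K, vMat K}, ∀ y ∈ Submodule.span K {uMat K, vMat K},
      ∀ z ∈ Submodule.span K {uMat K, vMat K}, ∀ x' ∈ Submodule.span K {uMat K, vMat K},
      ∀ y' ∈ Submodule.span K {uMat K, vMat K},
        trip (trip x y z) x' y'
          = trip (trip x x' y') y z + trip x (trip y x' y') z + trip x y (trip z x' y')) := by
  have hu := uMat_mem_span (K := K)
  have hv := vMat_mem_span (K := K)
  refine ⟨fun x hx y hy z hz => trip_mem_span hx hy hz, ?_, ?_, ?_, ?_, ?_⟩
  · rw [trip_eq_of_mem_span hv hu hu]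
    simp [uMat, vMat]
  · rw [trip_eq_of_mem_span hv hu hv]
    simp [uMat, vMat]
  · intro x hx y hy z hz
    rw [trip_eq_of_mem_span hx hy hz, trip_eq_of_mem_span hy hx hz, ← neg_smul]
    congr 1
    ring
  · intro x hx y hy z hz
    rw [trip_eq_of_mem_span hx hy hz, trip_eq_of_mem_span hy hz hx, trip_eq_of_mem_span hz hx hy,
      ← add_smul, ← add_smul]
    exact smul_eq_zero_of_left (by ring) _
  · intro x hx y hy z hz x' hx' y' hy'
    rw [trip_eq_of_mem_span (trip_mem_span hx hy hz) hx' hy',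
      trip_eq_of_mem_span (trip_mem_span hx hx' hy') hy hz,
      trip_eq_of_mem_span hx (trip_mem_span hy hx' hy') hz,
      trip_eq_of_mem_span hx hy (trip_mem_span hz hx' hy'), trip_eq_of_mem_span hx hy hz,
      trip_eq_of_mem_span hx hx' hy', trip_eq_of_mem_span hy hx' hy',
      trip_eq_of_mem_span hz hx' hy']
    simp only [smul_uMat_apply_zero_two, smul_uMat_apply_one_zero, ← add_smul]
    congr 1
    ring

/-- The span `T₃` of `u` and `v` is closed under the triple product
`[x,y,z] = (1/4)[[x,y],z]`, one has `[v,u,u] = 0` and `[v,u,v] = −(1/4)u`, and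
`(T₃,[·,·,·])` is a commutative automorphic Lie triple system. -/
theorem stmt_16 (K : Type*) [Field K] [CharZero K] :
    (∀ x ∈ Submodule.span K {uMat K, vMat K}, ∀ y ∈ Submodule.span K {uMat K, vMat K},
      ∀ z ∈ Submodule.span K {uMat K, vMat K},
        trip x y z ∈ Submodule.span K {uMat K, vMat K}) ∧
    trip (vMat K) (uMat K) (uMat K) = 0 ∧
    trip (vMat K) (uMat K) (vMat K) = - ((4 : K)⁻¹ • uMat K) ∧
    (∀ x ∈ Submodule.span K {uMat K, vMat K}, ∀ y ∈ Submodule.span K {uMat K, vMat K},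
      ∀ z ∈ Submodule.span K {uMat K, vMat K}, trip x y z = - trip y x z) ∧
    (∀ x ∈ Submodule.span K {uMat K, vMat K}, ∀ y ∈ Submodule.span K {uMat K, vMat K},
      ∀ z ∈ Submodule.span K {uMat K, vMat K},
        trip x y z + trip y z x + trip z x y = 0) ∧
    (∀ x ∈ Submodule.span K {uMat K, vMat K}, ∀ y ∈ Submodule.span K {uMat K, vMat K},
      ∀ z ∈ Submodule.span K {uMat K, vMat K}, ∀ x' ∈ Submodule.span K {uMat K, vMat K},
      ∀ y' ∈ Submodule.span K {uMat K, vMat K},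
        trip (trip x y z) x' y'
          = trip (trip x x' y') y z + trip x (trip y x' y') z + trip x y (trip z x' y')) :=
  stmt_16_general K
end
end

section
/- Let ā := −2(u − v) and b̄ := 2(u + v) in M₃(K), with the triple product [x,y,z] := (1/4)[[x,y],z]. For all integers i, j ≥ 1 with i + j odd and i + j ≥ 3, the left-normed iterated bracket [ā, b̄, ā, …, ā, b̄, …, b̄] with i − 1 copies of ā followed by j − 1 copies of b̄ after the initial pair (ā, b̄) equals −4u. -/
/-!
Both `ā = 2v - 2u` and `b̄ = 2v + 2u` lie on the line `c ↦ 2v + c u`. A direct computation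
gives `[2v + c u, 2v + d u, 2v + e u] = (c - d) u` and `[u, 2v + d u, 2v + e u] = u`, so the
first triple `[ā, b̄, ·]` already equals `-4u` and every further pair of arguments fixes it.
-/
noncomputable section

/-- The left-normed iterated bracket `[x₁,x₂,…,xₙ] = [[…[x₁,x₂,x₃],x₄,x₅],…,x_{n−1},xₙ]`:
`iterBr x [x₂,x₃,…,xₙ]` consumes the remaining arguments two at a time. -/
def iterBr {K : Type*} [Field K] :
    Matrix (Fin 3) (Fin 3) K → List (Matrix (Fin 3) (Fin 3) K) → Matrix (Fin 3) (Fin 3) K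
  | x, y :: z :: rest => iterBr (trip x y z) rest
  | x, _ => x

open Matrix

section

variable {K : Type*} [Field K]

variable (K) in
def pencil (c : K) : Matrix (Fin 3) (Fin 3) K := (2 : K) • vMat K + c • uMat K

lemma neg_two_smul_uMat_sub_vMat : (-2 : K) • (uMat K - vMat K) = pencil K (-2) := by
  unfold pencil; module

lemma two_smul_uMat_add_vMat : (2 : K) • (uMat K + vMat K) = pencil K 2 := by
  unfold pencil; module

lemma trip_smul_left (a : K) (x y z : Matrix (Fin 3) (Fin 3) K) :
    trip (a • x) y z = a • trip x y z := by
  simp only [trip, smul_mul_assoc, mul_smul_comm, ← smul_sub, smul_comm a]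

lemma iterBr_eq_self_of_trip_eq (w : Matrix (Fin 3) (Fin 3) K) :
    ∀ l : List (Matrix (Fin 3) (Fin 3) K), (∀ y ∈ l, ∀ z ∈ l, trip w y z = w) → iterBr w l = w
  | [], _ | [_], _ => rfl
  | y :: z :: l, h => by
    rw [iterBr, h y (by simp) z (by simp)]
    exact iterBr_eq_self_of_trip_eq w l fun a ha b hb => h a (by simp [ha]) b (by simp [hb])

variable [NeZero (2 : K)]

lemma trip_pencil (c d e : K) :
    trip (pencil K c) (pencil K d) (pencil K e) = (c - d) • uMat K := by
  ext i j
  fin_cases i <;> fin_cases j <;>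
    simp [trip, pencil, uMat, vMat, mul_apply, Fin.sum_univ_three, single]
  field_simp [show (4 : K) = 2 * 2 by norm_num]
  ring

lemma trip_uMat_pencil (d e : K) :
    trip (uMat K) (pencil K d) (pencil K e) = uMat K := by
  ext i j
  fin_cases i <;> fin_cases j <;>
    simp [trip, pencil, uMat, vMat, mul_apply, Fin.sum_univ_three, single]
  field_simp [show (4 : K) = 2 * 2 by norm_num]
  ring

lemma iterBr_pencil (c d : K) {l : List (Matrix (Fin 3) (Fin 3) K)}
    (hl : ∀ x ∈ l, x ∈ Set.range (pencil K)) (hne : l ≠ []) :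
    iterBr (pencil K c) (pencil K d :: l) = (c - d) • uMat K := by
  obtain ⟨y, l, rfl⟩ := List.exists_cons_of_ne_nil hne
  obtain ⟨e, rfl⟩ := hl _ List.mem_cons_self
  rw [iterBr, trip_pencil]
  refine iterBr_eq_self_of_trip_eq _ l fun y hy z hz => ?_
  obtain ⟨d', rfl⟩ := hl y (List.mem_cons_of_mem _ hy)
  obtain ⟨e', rfl⟩ := hl z (List.mem_cons_of_mem _ hz)
  rw [trip_smul_left, trip_uMat_pencil]

end

theorem stmt_17_general (K : Type*) [Field K] [CharZero K] (i j : ℕ) (hge : 3 ≤ i + j) :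
    iterBr ((-2 : K) • (uMat K - vMat K))
        (((2 : K) • (uMat K + vMat K)) ::
          (List.replicate (i - 1) ((-2 : K) • (uMat K - vMat K))
            ++ List.replicate (j - 1) ((2 : K) • (uMat K + vMat K))))
      = (-4 : K) • uMat K := by
  rw [neg_two_smul_uMat_sub_vMat, two_smul_uMat_add_vMat, iterBr_pencil]
  · norm_num
  · simp only [List.mem_append, List.mem_replicate]
    rintro x (⟨-, rfl⟩ | ⟨-, rfl⟩) <;> exact Set.mem_range_self _
  · simp only [ne_eq, List.append_eq_nil_iff, List.replicate_eq_nil_iff]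
    omega

/-- with `ā := −2(u−v)` and `b̄ := 2(u+v)`, for `i, j ≥ 1` with `i + j` odd
and `i + j ≥ 3`, the left-normed bracket `[ā,b̄,ā,…(i−1)…,ā,b̄,…(j−1)…,b̄]` equals `−4u`. -/
theorem stmt_17 (K : Type*) [Field K] [CharZero K] (i j : ℕ) (hi : 1 ≤ i) (hj : 1 ≤ j)
    (hodd : Odd (i + j)) (hge : 3 ≤ i + j) :
    iterBr ((-2 : K) • (uMat K - vMat K))
        (((2 : K) • (uMat K + vMat K)) ::
          (List.replicate (i - 1) ((-2 : K) • (uMat K - vMat K))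
            ++ List.replicate (j - 1) ((2 : K) • (uMat K + vMat K))))
      = (-4 : K) • uMat K :=
  stmt_17_general K i j hge
end
end
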